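/- Let G = D_n be the dihedral group generated by a rotation a of order n and a reflection b, and let H = ⟨a⟩ be the cyclic rotation subgroup (of index 2). For every subgroup J ≤ H and every r ∈ G \ H, the partition P = {h(J ∪ Jr) : h ∈ H} satisfies gP = P for all g ∈ G. (No Type I partition of D_n gives a chirally perfect coloring.) -/

import Mathlib

open Pointwise

/-- The action of `g : G` on a family of subsets of `G` by left multiplication. -/
def smulFam {G : Type*} [Group G] (g : G) (P : Set (Set G)) : Set (Set G) :=
  (fun S => g • S) '' P

/-- The Type I family `{h(J ∪ Jr) : h ∈ H}` of subsets of `G`. -/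
def typeIFam {G : Type*} [Group G] (H : Subgroup G) (J : Set G) (r : G) : Set (Set G) :=
  {S : Set G | ∃ h ∈ H, S = h • (J ∪ J * ({r} : Set G))}

/-- The rotation subgroup `⟨a⟩` of the dihedral group `D_n`. -/
def rotations (n : ℕ) : Subgroup (DihedralGroup n) where
  carrier := Set.range DihedralGroup.r
  mul_mem' := by rintro _ _ ⟨i, rfl⟩ ⟨j, rfl⟩; exact ⟨i + j, rfl⟩
  one_mem' := ⟨0, rfl⟩
  inv_mem' := by rintro _ ⟨i, rfl⟩; exact ⟨-i, rfl⟩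

/-!
A reflection `r` squares to `1` and normalises every subgroup `J` of the rotations, so it fixes
`J ∪ Jr`. As the rotations have index 2 and `r` is not one of them, every `g` is a rotation or a
rotation times `r`; hence the orbit of `J ∪ Jr` under the rotations is its full `D_n`-orbit, which
every `g` permutes.
-/

namespace MulAction

variable {G α : Type*} [Group G] [MulAction G α]

lemma orbit_subgroup_eq_orbit_of_index_eq_two {H : Subgroup G} (hH : H.index = 2) {r : G}
    (hr : r ∉ H) {a : α} (ha : r • a = a) : orbit H a = orbit G a := by
  refine (orbit_subgroup_subset H a).antisymm ?_
  rintro _ ⟨g, rfl⟩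
  by_cases hg : g ∈ H
  · exact ⟨⟨g, hg⟩, rfl⟩
  · have hgr : g * r⁻¹ ∈ H := by
      rw [Subgroup.mul_mem_iff_of_index_two hH, H.inv_mem_iff]
      exact iff_of_false hg hr
    refine ⟨⟨g * r⁻¹, hgr⟩, ?_⟩
    change (g * r⁻¹) • a = g • a
    rw [mul_smul, ← ha, inv_smul_smul, ha]

end MulAction

lemma Subgroup.smul_union_mul_singleton_self {G : Type*} [Group G] (N : Subgroup G) [N.Normal]
    {r : G} (hr : r * r = 1) :
    r • ((N : Set G) ∪ N * {r}) = (N : Set G) ∪ N * {r} := by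
  have hrN : r • (N : Set G) = N * {r} := by
    rw [eq_cosets_of_normal (s := N) ‹_›, Set.mul_singleton]; rfl
  rw [Set.smul_set_union, hrN, ← smul_mul_assoc, hrN, mul_assoc, Set.singleton_mul_singleton, hr,
    Set.singleton_one, mul_one, Set.union_comm]

lemma typeIFam_eq_orbit {G : Type*} [Group G] (H : Subgroup G) (J : Set G) (r : G) :
    typeIFam H J r = MulAction.orbit H (J ∪ J * {r}) := by
  ext S
  constructor
  · rintro ⟨h, hh, rfl⟩; exact ⟨⟨h, hh⟩, rfl⟩
  · rintro ⟨⟨h, hh⟩, rfl⟩; exact ⟨h, hh, rfl⟩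

namespace DihedralGroup

variable {n : ℕ}

@[simp] lemma r_mem_rotations (i : ZMod n) : r i ∈ rotations n := ⟨i, rfl⟩

@[simp] lemma sr_notMem_rotations (i : ZMod n) : sr i ∉ rotations n := by
  rintro ⟨j, hj⟩; cases hj

lemma index_rotations : (rotations n).index = 2 :=
  Subgroup.index_eq_two_iff.mpr ⟨sr 0, by rintro (i | i) <;> simp [r_mul_sr, sr_mul_sr]⟩

lemma mul_self_eq_one_of_notMem_rotations {g : DihedralGroup n} (hg : g ∉ rotations n) :
    g * g = 1 := by
  cases g with
  | r i => exact absurd (r_mem_rotations i) hg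
  | sr i => exact sr_mul_self i

lemma normal_of_le_rotations {J : Subgroup (DihedralGroup n)} (hJ : J ≤ rotations n) :
    J.Normal where
  conj_mem := by
    rintro _ hx (j | j)
    · obtain ⟨i, rfl⟩ := hJ hx
      simpa [r_mul_r, inv_r, add_comm] using hx
    · obtain ⟨i, rfl⟩ := hJ hx
      simpa [sr_mul_r, inv_sr, sr_mul_sr, inv_r] using J.inv_mem hx

end DihedralGroup

theorem stmt_14 (n : ℕ) (J : Subgroup (DihedralGroup n)) (hJ : J ≤ rotations n)
    (r : DihedralGroup n) (hr : r ∉ rotations n) :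
    ∀ g : DihedralGroup n,
      smulFam g (typeIFam (rotations n) (J : Set (DihedralGroup n)) r) =
        typeIFam (rotations n) (J : Set (DihedralGroup n)) r := by
  intro g
  have : J.Normal := DihedralGroup.normal_of_le_rotations hJ
  have hS := J.smul_union_mul_singleton_self (DihedralGroup.mul_self_eq_one_of_notMem_rotations hr)
  rw [typeIFam_eq_orbit,
    MulAction.orbit_subgroup_eq_orbit_of_index_eq_two DihedralGroup.index_rotations hr hS]
  exact MulAction.smul_orbit g _
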